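/- Let w ∈ 𝒜 be non-empty of even length and let c₁, c₂ ∈ 𝒜 be words such that c₁ w c₂ ∈ 𝒜 is an alternating word. Then there exist words d₁, d₂, w' ∈ 𝒜 with w' of even length and [w'] = ᾱ([w]) ∈ 𝒜̄₀ such that α(c₁ wⁿ c₂) = d₁ w'^{n−1} d₂ as reduced words for all n ≥ 1; if w lies in the commutator subgroup of F₂, then w' is non-empty. The analogous statement holds for β with β̄. -/

import Mathlib

open FreeGroup

abbrev W : Type := FreeGroup (Fin 2)

def Alt : Set W := {w | List.Chain' (fun p q : Fin 2 × Bool => p.1 ≠ q.1) w.toWord}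

/-- The word map underlying `α`: repeatedly merge two consecutive `a`-letters of the
same sign across the single `b`-letter separating them (replacing each block of the
`a`-decomposition lying in `S_a⁺` by `a` and each block in `S_a⁻` by `a⁻¹`). -/
def goA : List (Fin 2 × Bool) → List (Fin 2 × Bool)
  | x :: y :: z :: rest =>
      if x.1 = 0 ∧ y.1 = 1 ∧ z.1 = 0 ∧ x.2 = z.2 then goA (x :: rest)
      else x :: goA (y :: z :: rest)
  | l => l
termination_by l => l.length

/-- The word map underlying `β`. -/
def goB : List (Fin 2 × Bool) → List (Fin 2 × Bool)
  | x :: y :: z :: rest =>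
      if x.1 = 1 ∧ y.1 = 0 ∧ z.1 = 1 ∧ x.2 = z.2 then goB (x :: rest)
      else x :: goB (y :: z :: rest)
  | l => l
termination_by l => l.length

/-- The map `α : 𝒜 → 𝒜`. -/
def alphaF (w : W) : W := FreeGroup.mk (goA w.toWord)

/-- The map `β : 𝒜 → 𝒜`. -/
def betaF (w : W) : W := FreeGroup.mk (goB w.toWord)

/-- The first letter of `w` (as a one-letter word), or `1` if `w` is trivial. -/
def firstLetter (w : W) : W := FreeGroup.mk (w.toWord.take 1)

/-- `ᾱ` computed on a representative `w = x·w'` beginning with a letter `x`: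
`ᾱ([w]) = [α(x w' x)·x⁻¹] = [α(w·x)·x⁻¹]`. -/
def abarF (w : W) : W := alphaF (w * firstLetter w) * (firstLetter w)⁻¹

/-- `β̄` computed on a representative `w = y·w'` beginning with a letter `y`. -/
def bbarF (w : W) : W := betaF (w * firstLetter w) * (firstLetter w)⁻¹

/-!
Fix the generator `g` that is being collapsed (`a` for `α`, `b` for `β`); `α` merges each maximal
run of `g`-letters of one sign, consecutive ones separated by a single other letter, into its first
letter. If two consecutive `g`-letters of `w = A g^s y g^t B` have opposite signs, no merge crosses
the cut between `g^s` and `y`, in any copy of `w`. So `α(c₁ wⁿ c₂)` splits along these cuts into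
`α(c₁ A g^s)`, then `n - 1` copies of `α` of the rotation `y g^t B A g^s` of `w`, then
`α(y g^t B c₂)`; the middle word is non-empty and conjugate to `ᾱ(w)`. Otherwise all `g`-letters
of `w` have the same sign `s`: each new copy of `w` is swallowed by a run, so
`α(c₁ wⁿ c₂) = α(c₁ w c₂)` for all `n`, `ᾱ([w])` is trivial, and `w` has non-zero exponent sum
in `g`, hence does not lie in the commutator subgroup.
-/

abbrev IsAlternating (L : List (Fin 2 × Bool)) : Prop := L.IsChain fun p q => p.1 ≠ q.1

/-- `goA` and `goB` with the generator `g` as a parameter. -/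
def goG (g : Fin 2) : List (Fin 2 × Bool) → List (Fin 2 × Bool)
  | x :: y :: z :: rest =>
      if x.1 = g ∧ y.1 ≠ g ∧ z.1 = g ∧ x.2 = z.2 then goG g (x :: rest)
      else x :: goG g (y :: z :: rest)
  | l => l
termination_by l => l.length

section Collapse

variable (g : Fin 2)

@[simp] lemma goG_nil : goG g [] = [] := by simp [goG]

@[simp] lemma goG_singleton (x : Fin 2 × Bool) : goG g [x] = [x] := by simp [goG]

@[simp] lemma goG_pair (x y : Fin 2 × Bool) : goG g [x, y] = [x, y] := by simp [goG]

lemma goG_cons_cons_cons (x y z : Fin 2 × Bool) (r : List (Fin 2 × Bool)) :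
    goG g (x :: y :: z :: r) =
      if x.1 = g ∧ y.1 ≠ g ∧ z.1 = g ∧ x.2 = z.2 then goG g (x :: r)
      else x :: goG g (y :: z :: r) := by
  rw [goG]

lemma goG_cons_cons_of_imp {x y : Fin 2 × Bool} (h : x.1 = g → y.1 = g)
    (L : List (Fin 2 × Bool)) : goG g (x :: y :: L) = x :: goG g (y :: L) := by
  cases L with
  | nil => simp
  | cons z r => rw [goG_cons_cons_cons, if_neg (by tauto)]

lemma goG_cons_of_ne {x : Fin 2 × Bool} (hx : x.1 ≠ g) (L : List (Fin 2 × Bool)) :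
    goG g (x :: L) = x :: goG g L := by
  cases L with
  | nil => simp
  | cons y L => exact goG_cons_cons_of_imp g (fun h => absurd h hx) L

lemma head?_goG : ∀ L : List (Fin 2 × Bool), (goG g L).head? = L.head?
  | [] | [_] | [_, _] => by simp
  | x :: y :: z :: r => by
      rw [goG_cons_cons_cons]
      split
      · rw [head?_goG (x :: r)]; rfl
      · rfl
termination_by L => L.length

lemma length_goG_mod_two : ∀ L : List (Fin 2 × Bool), (goG g L).length % 2 = L.length % 2
  | [] | [_] | [_, _] => by simp
  | x :: y :: z :: r => by
      have h₁ := length_goG_mod_two (x :: r)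
      have h₂ := length_goG_mod_two (y :: z :: r)
      rw [goG_cons_cons_cons]
      split <;> simp only [List.length_cons] at * <;> omega
termination_by L => L.length

lemma isAlternating_goG : ∀ {L : List (Fin 2 × Bool)}, IsAlternating L → IsAlternating (goG g L)
  | [], h => by rwa [goG_nil]
  | [_], h => by rwa [goG_singleton]
  | [_, _], h => by rwa [goG_pair]
  | x :: y :: z :: r, h => by
      rw [goG_cons_cons_cons]
      split
      · next hmerge =>
        -- `x` and `z` carry the same generator, so `x` may stand in for `z` in front of `r`
        refine isAlternating_goG (List.isChain_cons.2 ⟨fun b hb => ?_, h.tail.tail.tail⟩)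
        rw [hmerge.1, ← hmerge.2.2.1]
        exact (List.isChain_cons.1 h.tail.tail).1 b hb
      · refine List.isChain_cons.2 ⟨fun b hb => ?_, isAlternating_goG h.tail⟩
        rw [head?_goG] at hb
        cases hb
        exact h.rel
termination_by L => L.length

lemma goG_append_cons_cons_cons_of_ne {s t : Bool} (hst : s ≠ t) (y : Fin 2 × Bool)
    (Q : List (Fin 2 × Bool)) : ∀ P : List (Fin 2 × Bool),
    goG g (P ++ (g, s) :: y :: (g, t) :: Q) =
      goG g (P ++ [(g, s)]) ++ goG g (y :: (g, t) :: Q)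
  | [] => by
      rw [List.nil_append, goG_cons_cons_cons, if_neg fun h => hst h.2.2.2, List.nil_append,
        goG_singleton, List.singleton_append]
  | [x] => by
      show goG g (x :: (g, s) :: y :: (g, t) :: Q) = goG g [x, (g, s)] ++ _
      rw [goG_cons_cons_of_imp g (fun _ => rfl), goG_pair]
      simpa using goG_append_cons_cons_cons_of_ne hst y Q []
  | [x, x'] => by
      show goG g (x :: x' :: (g, s) :: y :: (g, t) :: Q) = goG g [x, x', (g, s)] ++ _
      rw [goG_cons_cons_cons g x x' (g, s) (y :: (g, t) :: Q), goG_cons_cons_cons g x x' (g, s) []]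
      split
      · next hmerge =>
        rw [goG_cons_cons_cons, if_neg fun h => hst (hmerge.2.2.2.symm.trans h.2.2.2),
          goG_singleton, List.singleton_append]
      · exact congrArg (x :: ·) (goG_append_cons_cons_cons_of_ne hst y Q [x'])
  | x :: x' :: z :: P => by
      show goG g (x :: x' :: z :: (P ++ (g, s) :: y :: (g, t) :: Q)) =
        goG g (x :: x' :: z :: (P ++ [(g, s)])) ++ _
      rw [goG_cons_cons_cons g x x' z, goG_cons_cons_cons g x x' z]
      split
      · exact goG_append_cons_cons_cons_of_ne hst y Q (x :: P)
      · exact congrArg (x :: ·) (goG_append_cons_cons_cons_of_ne hst y Q (x' :: z :: P))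
termination_by P => P.length

lemma goG_append_cons_cons_cons_self {x y : Fin 2 × Bool} (hx : x.1 = g) (hy : y.1 ≠ g)
    (B : List (Fin 2 × Bool)) : ∀ A : List (Fin 2 × Bool),
    goG g (A ++ x :: y :: x :: B) = goG g (A ++ x :: B)
  | [] => by rw [List.nil_append, goG_cons_cons_cons, if_pos ⟨hx, hy, hx, rfl⟩, List.nil_append]
  | [a] => by
      show goG g (a :: x :: y :: x :: B) = goG g (a :: x :: B)
      rw [goG_cons_cons_of_imp g (fun _ => hx) (y :: x :: B),
        goG_cons_cons_of_imp g (fun _ => hx) B]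
      exact congrArg (a :: ·) (goG_append_cons_cons_cons_self hx hy B [])
  | [a, b] => by
      show goG g (a :: b :: x :: y :: x :: B) = goG g (a :: b :: x :: B)
      rw [goG_cons_cons_cons g a b x (y :: x :: B), goG_cons_cons_cons g a b x B]
      split
      · next hmerge =>
        obtain rfl : a = x := Prod.ext (hmerge.1.trans hx.symm) hmerge.2.2.2
        exact goG_append_cons_cons_cons_self hx hy B []
      · exact congrArg (a :: ·) (goG_append_cons_cons_cons_self hx hy B [b])
  | a :: b :: c :: A => by
      show goG g (a :: b :: c :: (A ++ _)) = goG g (a :: b :: c :: (A ++ _))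
      rw [goG_cons_cons_cons g a b c, goG_cons_cons_cons g a b c]
      split
      · exact goG_append_cons_cons_cons_self hx hy B (a :: A)
      · exact congrArg (a :: ·) (goG_append_cons_cons_cons_self hx hy B (b :: c :: A))
termination_by A => A.length

end Collapse

inductive Collapsible (g : Fin 2) (s : Bool) : List (Fin 2 × Bool) → Prop
  | nil : Collapsible g s []
  | cons {y : Fin 2 × Bool} (hy : y.1 ≠ g) {r : List (Fin 2 × Bool)} :
      Collapsible g s r → Collapsible g s (y :: (g, s) :: r)

lemma Collapsible.goG_append_cons_append {g : Fin 2} {s : Bool} {r : List (Fin 2 × Bool)}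
    (hr : Collapsible g s r) (A B : List (Fin 2 × Bool)) :
    goG g (A ++ (g, s) :: (r ++ B)) = goG g (A ++ (g, s) :: B) := by
  induction hr with
  | nil => rfl
  | cons hy _ ih => rw [List.cons_append, List.cons_append,
      goG_append_cons_cons_cons_self g rfl hy, ih]

lemma IsAlternating.fst_head_ne_fst_getLast : ∀ {L : List (Fin 2 × Bool)}, IsAlternating L →
    Even L.length → ∀ x ∈ L.head?, ∀ z ∈ L.getLast?, x.1 ≠ z.1
  | [], _, _ => by simp
  | [_], _, heven => by simp at heven
  | [x, y], h, _ => by simpa using h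
  | x :: y :: a :: L, h, heven => by
      have ih := IsAlternating.fst_head_ne_fst_getLast h.tail.tail
        (by simpa [Nat.even_add_one] using heven)
      have hxy : x.1 ≠ y.1 := h.rel
      have hya : y.1 ≠ a.1 := h.tail.rel
      intro x' hx' z hz
      obtain rfl : x' = x := by simpa [eq_comm] using hx'
      rw [List.getLast?_cons_cons, List.getLast?_cons_cons] at hz
      have := ih a rfl z hz
      omega

lemma IsAlternating.append_self {L : List (Fin 2 × Bool)} (h : IsAlternating L)
    (heven : Even L.length) : IsAlternating (L ++ L) :=
  List.isChain_append.2 ⟨h, h, fun z hz x hx => (h.fst_head_ne_fst_getLast heven x hx z hz).symm⟩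

lemma IsAlternating.collapsible {g : Fin 2} {s : Bool} : ∀ {L : List (Fin 2 × Bool)},
    IsAlternating L → Even L.length → (∀ p ∈ L, p.1 = g → p.2 = s) →
    (∀ p ∈ L.head?, p.1 ≠ g) → Collapsible g s L
  | [], _, _, _, _ => .nil
  | [_], _, heven, _, _ => by simp at heven
  | y :: p :: L, h, heven, hs, hhead => by
      have hy : y.1 ≠ g := hhead y rfl
      have hp : p.1 = g := by have : y.1 ≠ p.1 := h.rel; omega
      obtain rfl : p = (g, s) := Prod.ext hp (hs p (by simp) hp)
      refine .cons hy (IsAlternating.collapsible h.tail.tail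
        (by simpa [Nat.even_add_one] using heven) (fun q hq => hs q (by simp [hq])) fun q hq => ?_)
      have : (g, s).1 ≠ q.1 := (List.isChain_cons.1 h.tail).1 q hq
      exact this.symm

lemma IsAlternating.same_sign_or_sign_change (g : Fin 2) : ∀ {L : List (Fin 2 × Bool)},
    IsAlternating L → (∃ s, ∀ p ∈ L, p.1 = g → p.2 = s) ∨
      ∃ A s y t B, y.1 ≠ g ∧ s ≠ t ∧ L = A ++ (g, s) :: y :: (g, t) :: B
  | [], _ => .inl ⟨true, by simp⟩
  | [p], _ => .inl ⟨p.2, by simp⟩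
  | p :: q :: L, h => by
      rcases IsAlternating.same_sign_or_sign_change g h.tail with
        ⟨s, hs⟩ | ⟨A, s, y, t, B, hy, hst, hL⟩
      · by_cases hps : p.1 = g → p.2 = s
        · exact .inl ⟨s, fun x hx => (List.mem_cons.1 hx).elim (fun e => e ▸ hps) (hs x)⟩
        · rw [Classical.not_imp] at hps
          have hq : q.1 ≠ g := by have : p.1 ≠ q.1 := h.rel; omega
          cases L with
          | nil => exact .inl ⟨p.2, by simp [hq]⟩
          | cons r L =>
            have hr : r.1 = g := by have : q.1 ≠ r.1 := h.tail.rel; omega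
            refine .inr ⟨[], p.2, q, s, L, hq, hps.2, ?_⟩
            simp [Prod.ext_iff, hps.1, hr, hs r (by simp) hr]
      · exact .inr ⟨p :: A, s, y, t, B, hy, hst, congrArg (p :: ·) hL⟩

lemma IsAlternating.exists_mem_fst_eq (g : Fin 2) {L : List (Fin 2 × Bool)}
    (h : IsAlternating L) (hlen : 2 ≤ L.length) : ∃ p ∈ L, p.1 = g := by
  match L, h with
  | x :: y :: _, h =>
    have : x.1 ≠ y.1 := h.rel
    by_cases hx : x.1 = g
    · exact ⟨x, by simp, hx⟩
    · exact ⟨y, by simp, by omega⟩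

lemma IsAlternating.collapsible_rotate {g : Fin 2} {s : Bool} {P Q : List (Fin 2 × Bool)}
    (h : IsAlternating (P ++ (g, s) :: Q)) (heven : Even (P ++ (g, s) :: Q).length)
    (hs : ∀ p ∈ P ++ (g, s) :: Q, p.1 = g → p.2 = s) : Collapsible g s (Q ++ P ++ [(g, s)]) := by
  have hV : IsAlternating (Q ++ P ++ [(g, s)]) :=
    (h.append_self heven).infix ⟨P ++ [(g, s)], Q, by simp⟩
  have hlen : (Q ++ P ++ [(g, s)]).length = (P ++ (g, s) :: Q).length := by simp; omega
  refine hV.collapsible (hlen ▸ heven) (fun p hp => hs p (by simp at hp ⊢; tauto)) fun x hx => ?_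
  simpa using hV.fst_head_ne_fst_getLast (hlen ▸ heven) x hx (g, s) (by simp)

lemma List.flatten_replicate_succ_append {α : Type*} (X Y : List α) (n : ℕ) :
    (replicate (n + 1) (X ++ Y)).flatten = X ++ (replicate n (Y ++ X)).flatten ++ Y := by
  induction n with
  | zero => simp
  | succ n ih => rw [replicate_succ, flatten_cons, ih]; simp [replicate_succ]

lemma Collapsible.goG_append_replicate_append {g : Fin 2} {s : Bool} {P Q : List (Fin 2 × Bool)}
    (hV : Collapsible g s (Q ++ P ++ [(g, s)])) (C R : List (Fin 2 × Bool)) (n : ℕ) :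
    goG g (C ++ (List.replicate (n + 1) (P ++ (g, s) :: Q)).flatten ++ R) =
      goG g (C ++ (P ++ (g, s) :: Q) ++ R) := by
  induction n with
  | zero => simp
  | succ n ih =>
    set L := P ++ (g, s) :: Q
    have hsplit : C ++ (List.replicate (n + 2) L).flatten ++ R =
        (C ++ P) ++ (g, s) :: ((Q ++ P ++ [(g, s)]) ++ (Q ++ (List.replicate n L).flatten ++ R)) :=
      by simp [L, List.replicate_succ]
    have hjoin : (C ++ P) ++ (g, s) :: (Q ++ (List.replicate n L).flatten ++ R) =
        C ++ (List.replicate (n + 1) L).flatten ++ R := by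
      simp [L, List.replicate_succ]
    rw [hsplit, hV.goG_append_cons_append, hjoin, ih]

lemma goG_append_replicate_append_of_ne (g : Fin 2) {s t : Bool} (hst : s ≠ t)
    (y : Fin 2 × Bool) (M E : List (Fin 2 × Bool)) (k : ℕ) : ∀ P : List (Fin 2 × Bool),
    goG g (P ++ [(g, s)] ++ (List.replicate k (y :: (g, t) :: (M ++ [(g, s)]))).flatten ++
        y :: (g, t) :: E) =
      goG g (P ++ [(g, s)]) ++
        (List.replicate k (goG g (y :: (g, t) :: (M ++ [(g, s)])))).flatten ++
        goG g (y :: (g, t) :: E) := by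
  induction k with
  | zero => simpa using goG_append_cons_cons_cons_of_ne g hst y E
  | succ k ih =>
    intro P
    have hhead := goG_append_cons_cons_cons_of_ne g hst y
      (M ++ [(g, s)] ++ (List.replicate k (y :: (g, t) :: (M ++ [(g, s)]))).flatten ++
        y :: (g, t) :: E) P
    have htail := ih (y :: (g, t) :: M)
    simp only [List.replicate_succ, List.flatten_cons, List.append_assoc, List.cons_append,
      List.nil_append] at hhead htail ⊢
    rw [hhead, htail]

lemma goG_append_replicate_append_of_sign_change (g : Fin 2) {s t : Bool} (hst : s ≠ t)
    (y : Fin 2 × Bool) (C₁ A B C₂ : List (Fin 2 × Bool)) (n : ℕ) :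
    goG g (C₁ ++ (List.replicate (n + 1) (A ++ (g, s) :: y :: (g, t) :: B)).flatten ++ C₂) =
      goG g (C₁ ++ A ++ [(g, s)]) ++
        (List.replicate n (goG g (y :: (g, t) :: (B ++ A ++ [(g, s)])))).flatten ++
        goG g (y :: (g, t) :: (B ++ C₂)) := by
  have := goG_append_replicate_append_of_ne g hst y (B ++ A) (B ++ C₂) n (C₁ ++ A)
  rw [show A ++ (g, s) :: y :: (g, t) :: B = (A ++ [(g, s)]) ++ (y :: (g, t) :: B) by simp,
    List.flatten_replicate_succ_append]
  simpa using this

lemma List.IsChain.append_flatten_replicate_append {α : Type*} {R : α → α → Prop}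
    {C L D : List α} (h : IsChain R (C ++ L ++ D)) (hLL : IsChain R (L ++ L)) (hne : L ≠ [])
    (n : ℕ) : IsChain R (C ++ (replicate (n + 1) L).flatten ++ D) := by
  have hsuffix : ∀ n, IsChain R ((replicate (n + 1) L).flatten ++ D) := by
    intro n
    induction n with
    | zero => simpa using h.infix ⟨C, [], by simp⟩
    | succ n ih =>
      simpa [replicate_succ] using hLL.append_overlap (by simpa [replicate_succ] using ih) hne
  simpa [replicate_succ] using
    (h.infix ⟨[], D, by simp⟩).append_overlap (by simpa [replicate_succ] using hsuffix n) hne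

lemma IsAlternating.isReduced {L : List (Fin 2 × Bool)} (h : IsAlternating L) :
    FreeGroup.IsReduced L :=
  h.imp fun _ _ hne heq => absurd heq hne

lemma IsAlternating.toWord_mk {L : List (Fin 2 × Bool)} (h : IsAlternating L) :
    (mk L).toWord = L := by
  rw [FreeGroup.toWord_mk, h.isReduced.reduce_eq]

lemma IsAlternating.toWord_mk_goG (g : Fin 2) {L : List (Fin 2 × Bool)} (h : IsAlternating L) :
    (mk (goG g L)).toWord = goG g L :=
  IsAlternating.toWord_mk (isAlternating_goG g h)

lemma isConj_mk_append_comm (X Y : List (Fin 2 × Bool)) :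
    IsConj (mk (Y ++ X)) (mk (X ++ Y)) := by
  rw [isConj_iff]
  exact ⟨mk X, by rw [← mul_mk, ← mul_mk]; group⟩

def alphaG (g : Fin 2) (x : W) : W := mk (goG g x.toWord)

def abarG (g : Fin 2) (u : W) : W := alphaG g (u * firstLetter u) * (firstLetter u)⁻¹

lemma IsAlternating.abarG_mk_cons (g : Fin 2) {x : Fin 2 × Bool} {R : List (Fin 2 × Bool)}
    (h : IsAlternating (x :: R ++ [x])) :
    abarG g (mk (x :: R)) = mk (goG g (x :: R ++ [x])) * (mk [x])⁻¹ := by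
  have hfirst : firstLetter (mk (x :: R)) = mk [x] := by
    rw [firstLetter, IsAlternating.toWord_mk (h.infix ⟨[], [x], by simp⟩)]
    rfl
  rw [abarG, hfirst, alphaG, mul_mk, h.toWord_mk]

lemma IsAlternating.toWord_alphaG_mul_pow_mul (g : Fin 2) {C₁ L C₂ : List (Fin 2 × Bool)}
    (h : IsAlternating (C₁ ++ L ++ C₂)) (hLL : IsAlternating (L ++ L)) (hne : L ≠ []) (n : ℕ) :
    (alphaG g (mk C₁ * mk L ^ (n + 1) * mk C₂)).toWord =
      goG g (C₁ ++ (List.replicate (n + 1) L).flatten ++ C₂) := by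
  have hpow : IsAlternating _ := h.append_flatten_replicate_append hLL hne n
  rw [alphaG, pow_mk, mul_mk, mul_mk, IsAlternating.toWord_mk hpow,
    IsAlternating.toWord_mk_goG g hpow]

def expSum (g : Fin 2) (s : Bool) : W →* Multiplicative ℤ :=
  FreeGroup.lift fun i => if i = g then Multiplicative.ofAdd (if s then 1 else -1) else 1

lemma toAdd_expSum_mk {g : Fin 2} {s : Bool} {L : List (Fin 2 × Bool)}
    (hs : ∀ p ∈ L, p.1 = g → p.2 = s) :
    (expSum g s (mk L)).toAdd = L.countP (·.1 = g) := by
  induction L with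
  | nil => rw [← one_eq_mk, _root_.map_one, toAdd_one, List.countP_nil, Nat.cast_zero]
  | cons x L ih =>
    rw [← List.singleton_append, ← mul_mk, _root_.map_mul, toAdd_mul,
      ih fun p hp => hs p (List.mem_cons_of_mem x hp)]
    by_cases hx : x.1 = g
    · have := hs x (by simp) hx
      cases s <;> simp_all [expSum] <;> ring
    · simp [expSum, hx]

lemma mk_notMem_commutator_of_same_sign {g : Fin 2} {s : Bool} {L : List (Fin 2 × Bool)}
    (hs : ∀ p ∈ L, p.1 = g → p.2 = s) (hg : ∃ p ∈ L, p.1 = g) : mk L ∉ commutator W := by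
  intro hc
  have hker := Abelianization.commutator_subset_ker (expSum g s) hc
  rw [MonoidHom.mem_ker, ← toAdd_eq_zero, toAdd_expSum_mk hs, Nat.cast_eq_zero,
    List.countP_eq_zero] at hker
  obtain ⟨p, hp, hpg⟩ := hg
  exact hker p hp (decide_eq_true hpg)

def HasPeriodicImage (g : Fin 2) (w c₁ c₂ : W) : Prop :=
  ∃ d₁ d₂ w' : W,
    Even w'.toWord.length ∧
    (w ∈ commutator W → w' ≠ 1) ∧
    (∃ u : W, IsConj u w ∧ (u.toWord.head?).map Prod.fst = some g ∧ IsConj w' (abarG g u)) ∧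
    ∀ n : ℕ, 1 ≤ n →
      (alphaG g (c₁ * w ^ n * c₂)).toWord =
        d₁.toWord ++ (List.replicate (n - 1) w'.toWord).flatten ++ d₂.toWord

lemma hasPeriodicImage_of_same_sign {g : Fin 2} {s : Bool} {C₁ L C₂ : List (Fin 2 × Bool)}
    (h : IsAlternating (C₁ ++ L ++ C₂)) (heven : Even L.length) (hne : L ≠ [])
    (hs : ∀ p ∈ L, p.1 = g → p.2 = s) : HasPeriodicImage g (mk L) (mk C₁) (mk C₂) := by
  have hL : IsAlternating L := h.infix ⟨C₁, C₂, rfl⟩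
  have hLL := hL.append_self heven
  obtain ⟨p, hpL, hpg⟩ := hL.exists_mem_fst_eq g (by
    obtain ⟨k, hk⟩ := heven; have := List.length_pos_of_ne_nil hne; omega)
  have hp : p = (g, s) := Prod.ext hpg (hs p hpL hpg)
  obtain ⟨P, Q, rfl⟩ := List.append_of_mem (hp ▸ hpL)
  have hV := hL.collapsible_rotate heven hs
  have hu : IsAlternating ((g, s) :: (Q ++ P) ++ [(g, s)]) := hLL.infix ⟨P, Q, by simp⟩
  have hu_one : abarG g (mk ((g, s) :: (Q ++ P))) = 1 := by
    have hcollapse := hV.goG_append_cons_append [] []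
    simp only [List.nil_append, List.append_nil, goG_singleton] at hcollapse
    rw [hu.abarG_mk_cons, List.cons_append, hcollapse, mul_inv_cancel]
  refine ⟨mk (goG g (C₁ ++ (P ++ (g, s) :: Q) ++ C₂)), 1, 1, by simp,
    fun hc => absurd hc (mk_notMem_commutator_of_same_sign hs ⟨p, hpL, hpg⟩),
    ⟨mk ((g, s) :: (Q ++ P)), by simpa using isConj_mk_append_comm P ((g, s) :: Q), ?_,
      isConj_one_right.2 hu_one⟩, fun n hn => ?_⟩
  · rw [IsAlternating.toWord_mk (hu.infix ⟨[], [(g, s)], by simp⟩)]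
    rfl
  · obtain ⟨n, rfl⟩ := Nat.exists_eq_add_of_le' hn
    rw [h.toWord_alphaG_mul_pow_mul g hLL hne, hV.goG_append_replicate_append, h.toWord_mk_goG]
    simp

lemma IsAlternating.isConj_mk_goG_abarG (g : Fin 2) {s t : Bool} (hst : s ≠ t)
    {y : Fin 2 × Bool} (hy : y.1 ≠ g) {M : List (Fin 2 × Bool)}
    (h : IsAlternating ((g, t) :: (M ++ [(g, s), y]) ++ [(g, t)])) :
    IsConj (mk (goG g (y :: (g, t) :: (M ++ [(g, s)]))))
      (abarG g (mk ((g, t) :: (M ++ [(g, s), y])))) := by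
  have hsplit : goG g ((g, t) :: (M ++ [(g, s), y]) ++ [(g, t)]) =
      goG g ((g, t) :: M ++ [(g, s)]) ++ [y] ++ [(g, t)] := by
    simpa using goG_append_cons_cons_cons_of_ne g hst y [] ((g, t) :: M)
  rw [h.abarG_mk_cons, hsplit, ← mul_mk, mul_inv_cancel_right, goG_cons_of_ne g hy]
  exact isConj_mk_append_comm _ [y]

lemma hasPeriodicImage_of_sign_change {g : Fin 2} {s t : Bool} {y : Fin 2 × Bool}
    {C₁ A B C₂ : List (Fin 2 × Bool)} (hst : s ≠ t) (hy : y.1 ≠ g)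
    (h : IsAlternating (C₁ ++ (A ++ (g, s) :: y :: (g, t) :: B) ++ C₂))
    (heven : Even (A ++ (g, s) :: y :: (g, t) :: B).length) :
    HasPeriodicImage g (mk (A ++ (g, s) :: y :: (g, t) :: B)) (mk C₁) (mk C₂) := by
  have hLL := IsAlternating.append_self (h.infix ⟨C₁, C₂, rfl⟩) heven
  have hv : IsAlternating (y :: (g, t) :: (B ++ A ++ [(g, s)])) :=
    hLL.infix ⟨A ++ [(g, s)], y :: (g, t) :: B, by simp⟩
  have hu : IsAlternating ((g, t) :: (B ++ A ++ [(g, s), y]) ++ [(g, t)]) :=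
    hLL.infix ⟨A ++ [(g, s), y], B, by simp⟩
  have hd₁ : IsAlternating (C₁ ++ A ++ [(g, s)]) := h.infix ⟨[], y :: (g, t) :: B ++ C₂, by simp⟩
  have hd₂ : IsAlternating (y :: (g, t) :: (B ++ C₂)) := h.infix ⟨C₁ ++ A ++ [(g, s)], [], by simp⟩
  refine ⟨mk (goG g (C₁ ++ A ++ [(g, s)])), mk (goG g (y :: (g, t) :: (B ++ C₂))),
    mk (goG g (y :: (g, t) :: (B ++ A ++ [(g, s)]))), ?_, fun _ hw' => ?_,
    ⟨mk ((g, t) :: (B ++ A ++ [(g, s), y])), ?_, ?_, hu.isConj_mk_goG_abarG g hst hy⟩,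
    fun n hn => ?_⟩
  · have hlen : (y :: (g, t) :: (B ++ A ++ [(g, s)])).length =
        (A ++ (g, s) :: y :: (g, t) :: B).length := by simp; omega
    rwa [hv.toWord_mk_goG, Nat.even_iff, length_goG_mod_two, hlen, ← Nat.even_iff]
  · have := congrArg FreeGroup.toWord hw'
    rw [hv.toWord_mk_goG, goG_cons_of_ne g hy, toWord_one] at this
    exact List.cons_ne_nil _ _ this
  · simpa using isConj_mk_append_comm (A ++ [(g, s), y]) ((g, t) :: B)
  · rw [IsAlternating.toWord_mk (hu.infix ⟨[], [(g, t)], by simp⟩)]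
    rfl
  · obtain ⟨n, rfl⟩ := Nat.exists_eq_add_of_le' hn
    rw [h.toWord_alphaG_mul_pow_mul g hLL (by simp) n,
      goG_append_replicate_append_of_sign_change g hst, hd₁.toWord_mk_goG, hv.toWord_mk_goG,
      hd₂.toWord_mk_goG]
    simp

theorem hasPeriodicImage (g : Fin 2) (w c₁ c₂ : W) (hne : w ≠ 1)
    (heven : Even w.toWord.length) (halt : IsAlternating (c₁.toWord ++ w.toWord ++ c₂.toWord)) :
    HasPeriodicImage g w c₁ c₂ := by
  rw [← mk_toWord (x := w), ← mk_toWord (x := c₁), ← mk_toWord (x := c₂)]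
  rcases IsAlternating.same_sign_or_sign_change g (halt.infix ⟨_, _, rfl⟩) with
    ⟨s, hs⟩ | ⟨A, s, y, t, B, hy, hst, hw⟩
  · exact hasPeriodicImage_of_same_sign halt heven (by simpa using hne) hs
  · rw [hw] at halt heven ⊢
    exact hasPeriodicImage_of_sign_change hst hy halt heven

lemma goA_eq_goG : ∀ L, goA L = goG 0 L
  | [] | [_] | [_, _] => by simp [goA]
  | x :: y :: z :: r => by
      rw [goA, goG_cons_cons_cons, goA_eq_goG (x :: r), goA_eq_goG (y :: z :: r)]
      exact if_congr (and_congr_right' (and_congr_left' (by omega))) rfl rfl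
termination_by L => L.length

lemma goB_eq_goG : ∀ L, goB L = goG 1 L
  | [] | [_] | [_, _] => by simp [goB]
  | x :: y :: z :: r => by
      rw [goB, goG_cons_cons_cons, goB_eq_goG (x :: r), goB_eq_goG (y :: z :: r)]
      exact if_congr (and_congr_right' (and_congr_left' (by omega))) rfl rfl
termination_by L => L.length

lemma alphaF_eq_alphaG : alphaF = alphaG 0 := by
  funext x
  rw [alphaF, alphaG, goA_eq_goG]

lemma betaF_eq_alphaG : betaF = alphaG 1 := by
  funext x
  rw [betaF, alphaG, goB_eq_goG]

lemma abarF_eq_abarG : abarF = abarG 0 := by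
  funext u
  rw [abarF, abarG, alphaF_eq_alphaG]

lemma bbarF_eq_abarG : bbarF = abarG 1 := by
  funext u
  rw [bbarF, abarG, betaF_eq_alphaG]

/-- **Proposition.** Let `w ∈ 𝒜` be non-empty of even length and `c₁, c₂ ∈ 𝒜` with
`c₁ w c₂` alternating. Then there are `d₁, d₂, w' ∈ 𝒜` with `w'` of even length and
`[w'] = ᾱ([w])` such that `α(c₁ wⁿ c₂) = d₁ w'^{n-1} d₂` as reduced words for all
`n ≥ 1`; if `w` lies in the commutator subgroup then `w'` is non-empty.
The analogous statement holds for `β` and `β̄`. -/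
theorem alphaF_on_powers (w c₁ c₂ : W) (hne : w ≠ 1) (heven : Even w.toWord.length)
    (halt : List.Chain' (fun p q : Fin 2 × Bool => p.1 ≠ q.1)
      (c₁.toWord ++ w.toWord ++ c₂.toWord)) :
    (∃ d₁ d₂ w' : W,
      Even w'.toWord.length ∧
      (w ∈ commutator W → w' ≠ 1) ∧
      (∃ u : W, IsConj u w ∧ (u.toWord.head?).map Prod.fst = some (0 : Fin 2) ∧
        IsConj w' (abarF u)) ∧
      ∀ n : ℕ, 1 ≤ n →
        (alphaF (c₁ * w ^ n * c₂)).toWord =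
          d₁.toWord ++ (List.replicate (n - 1) w'.toWord).flatten ++ d₂.toWord) ∧
    (∃ d₁ d₂ w' : W,
      Even w'.toWord.length ∧
      (w ∈ commutator W → w' ≠ 1) ∧
      (∃ u : W, IsConj u w ∧ (u.toWord.head?).map Prod.fst = some (1 : Fin 2) ∧
        IsConj w' (bbarF u)) ∧
      ∀ n : ℕ, 1 ≤ n →
        (betaF (c₁ * w ^ n * c₂)).toWord =
          d₁.toWord ++ (List.replicate (n - 1) w'.toWord).flatten ++ d₂.toWord) := by
  rw [abarF_eq_abarG, bbarF_eq_abarG, alphaF_eq_alphaG, betaF_eq_alphaG]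
  exact ⟨hasPeriodicImage 0 w c₁ c₂ hne heven halt, hasPeriodicImage 1 w c₁ c₂ hne heven halt⟩
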